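/- Let a, k, b, v ∈ ℕ with a < 2^k, b < 2^v and v ≥ 1, let q = a + 2^k·b̄_{v,∞} ∈ ℤ₂, and set m = α(b). Then for every t ∈ ℕ with t ≥ 1, Φ(a + 2^k·b̄_{v,t}) = Φ(q) − (Φ(b̄_{v,∞})/3^{mt+α(a)})·2^{k+tv}, where division by 3^{mt+α(a)} means multiplication by its inverse in ℤ₂. -/

import Mathlib

noncomputable section

/-- The inverse of `3` in the ring of 2-adic integers. -/
def inv3 : ℤ_[2] := Ring.inverse 3

/-- The `j`-th binary digit of a 2-adic integer (as `0` or `1`). -/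
def dig (x : ℤ_[2]) (j : ℕ) : ℕ := if Nat.testBit (x.appr (j + 1)) j then 1 else 0

/-- The number of one digits of `x` in positions `< j`. -/
def digCount (x : ℤ_[2]) (j : ℕ) : ℕ := ∑ i ∈ Finset.range j, dig x i

/-- Bernstein's formula for the 3x+1 conjugacy map `Φ`:
if `x = ∑_i 2^{d_i}` with `d_0 < d_1 < ⋯`, then `Φ x = -∑_i 2^{d_i} 3^{-i}`. -/
def Phi (x : ℤ_[2]) : ℤ_[2] :=
  -∑' j : ℕ, (dig x j : ℤ_[2]) * 2 ^ j * inv3 ^ digCount x j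

/-- `L_k(x)`: the unique natural number `< 2^k` congruent to `x` mod `2^k`. -/
def Lk (k : ℕ) (x : ℤ_[2]) : ℕ := x.appr k

theorem two_pow_dvd_sub_appr (k : ℕ) (x : ℤ_[2]) :
    (2 : ℤ_[2]) ^ k ∣ x - (x.appr k : ℤ_[2]) := by
  have h := PadicInt.appr_spec k x
  rw [Ideal.mem_span_singleton] at h
  exact_mod_cast h

theorem exists_Rk (k : ℕ) (x : ℤ_[2]) :
    ∃ z : ℤ_[2], x = (x.appr k : ℤ_[2]) + 2 ^ k * z := by
  obtain ⟨c, hc⟩ := two_pow_dvd_sub_appr k x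
  exact ⟨c, by rw [← hc]; ring⟩

/-- `R_k(x)`: the unique 2-adic integer with `x = L_k(x) + 2^k · R_k(x)`. -/
def Rk (k : ℕ) (x : ℤ_[2]) : ℤ_[2] := (exists_Rk k x).choose

/-- `α(a)`: the number of ones in the binary expansion of `a`. -/
def alphaNat (a : ℕ) : ℕ := (Nat.bits a).count true

/-- `b̄_{v,∞} = b · ∑_{i=0}^∞ 2^{v i}` as a 2-adic integer. -/
def bbar (b v : ℕ) : ℤ_[2] := (b : ℤ_[2]) * ∑' i : ℕ, (2 : ℤ_[2]) ^ (v * i)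

/-- `b̄_{v,t} = b · ∑_{i=0}^{t-1} 2^{v i}` as a natural number. -/
def bbarFin (b v t : ℕ) : ℕ := b * ∑ i ∈ Finset.range t, 2 ^ (v * i)

/-- The farPoint `fP(x,k)`: the least `r` such that no 2-adic congruent to `x`
mod `2^k` is a fixed point of `Φ` mod `2^{k+r}`, and `∞` if no such `r` exists. -/
def fP (x k : ℕ) : ℕ∞ :=
  sInf ((↑) '' {r : ℕ | ∀ z : ℤ_[2],
    (2 : ℤ_[2]) ^ k ∣ z - (x : ℤ_[2]) → ¬ (2 : ℤ_[2]) ^ (k + r) ∣ Phi z - z})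

end

/-!
Bernstein's formula is additive over binary blocks: if `n < 2^N`, the digits of `n + 2^N z` are
those of `n` followed by those of `z`, and the digits of `z` are preceded by `α(n)` ones, so
`Φ(n + 2^N z) = Φ(n) + 2^N 3^{-α(n)} Φ(z)`. The repeated block satisfies
`b̄_{v,∞} = b̄_{v,t} + 2^{vt} b̄_{v,∞}`, hence `q = n + 2^{k+vt} b̄_{v,∞}` with
`n = a + 2^k b̄_{v,t} < 2^{k+vt}` and `α(n) = α(a) + t α(b)`, and the identity is this
additivity for `q`.
-/

namespace PadicInt

variable {p : ℕ} [Fact p.Prime]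

theorem appr_eq_val_toZModPow (x : ℤ_[p]) (n : ℕ) : x.appr n = (toZModPow n x).val := by
  change x.appr n = ((x.appr n : ℕ) : ZMod (p ^ n)).val
  rw [ZMod.val_natCast, Nat.mod_eq_of_lt (appr_lt x n)]

theorem appr_natCast (m n : ℕ) : (m : ℤ_[p]).appr n = m % p ^ n := by
  rw [appr_eq_val_toZModPow, map_natCast, ZMod.val_natCast]

theorem appr_eq_appr_of_dvd_sub {x y : ℤ_[p]} {n : ℕ} (h : (p : ℤ_[p]) ^ n ∣ x - y) :
    x.appr n = y.appr n := by
  have hker : x - y ∈ RingHom.ker (toZModPow n) := by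
    rw [ker_toZModPow]
    exact Ideal.mem_span_singleton.mpr h
  rw [RingHom.mem_ker, map_sub, sub_eq_zero] at hker
  rw [appr_eq_val_toZModPow, appr_eq_val_toZModPow, hker]

theorem norm_two : ‖(2 : ℤ_[2])‖ = 2⁻¹ := by
  simpa using norm_p (p := 2)

theorem summable_two_pow_mul {v : ℕ} (hv : 1 ≤ v) :
    Summable fun i : ℕ ↦ (2 : ℤ_[2]) ^ (v * i) := by
  simp_rw [pow_mul]
  refine summable_geometric_of_norm_lt_one ?_
  rw [norm_pow, norm_two]
  exact pow_lt_one₀ (by norm_num) (by norm_num) (by omega)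

end PadicInt

theorem Nat.add_two_pow_mul_lt {a k m M : ℕ} (ha : a < 2 ^ k) (hm : m < 2 ^ M) :
    a + 2 ^ k * m < 2 ^ (k + M) :=
  calc a + 2 ^ k * m < 2 ^ k * (m + 1) := by rw [mul_add_one]; omega
    _ ≤ 2 ^ k * 2 ^ M := Nat.mul_le_mul_left _ hm
    _ = 2 ^ (k + M) := (pow_add 2 k M).symm

section Digits

theorem dig_eq_of_dvd_sub {x y : ℤ_[2]} {j : ℕ} (h : (2 : ℤ_[2]) ^ (j + 1) ∣ x - y) :
    dig x j = dig y j := by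
  unfold dig
  rw [PadicInt.appr_eq_appr_of_dvd_sub (p := 2) (by exact_mod_cast h)]

theorem dig_natCast (n j : ℕ) : dig (n : ℤ_[2]) j = if n.testBit j then 1 else 0 := by
  simp [dig, PadicInt.appr_natCast, Nat.testBit_mod_two_pow]

theorem dig_zero (j : ℕ) : dig 0 j = 0 := by
  simpa using dig_natCast 0 j

theorem dig_add_two_pow_mul_of_lt (x z : ℤ_[2]) {N j : ℕ} (hj : j < N) :
    dig (x + 2 ^ N * z) j = dig x j :=
  dig_eq_of_dvd_sub <| by
    rw [add_sub_cancel_left]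
    exact (pow_dvd_pow 2 hj).mul_right z

theorem dig_add_two_pow_mul_add {n N : ℕ} (hn : n < 2 ^ N) (z : ℤ_[2]) (s : ℕ) :
    dig ((n : ℤ_[2]) + 2 ^ N * z) (N + s) = dig z s := by
  set w := z.appr (s + 1)
  have hcongr :
      dig ((n : ℤ_[2]) + 2 ^ N * z) (N + s) = dig ((n + 2 ^ N * w : ℕ) : ℤ_[2]) (N + s) := by
    refine dig_eq_of_dvd_sub ?_
    rw [Nat.cast_add, Nat.cast_mul, Nat.cast_pow, Nat.cast_ofNat, add_sub_add_left_eq_sub,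
      ← mul_sub, add_assoc, pow_add]
    exact mul_dvd_mul_left _ (two_pow_dvd_sub_appr (s + 1) z)
  rw [hcongr, dig_natCast, Nat.add_comm, Nat.testBit_two_pow_mul_add _ hn]
  simp [dig, w]

theorem digCount_add_two_pow_mul_of_le (x z : ℤ_[2]) {N j : ℕ} (hj : j ≤ N) :
    digCount (x + 2 ^ N * z) j = digCount x j :=
  Finset.sum_congr rfl fun _ hi ↦
    dig_add_two_pow_mul_of_lt x z ((Finset.mem_range.mp hi).trans_le hj)

theorem digCount_add_two_pow_mul_add {n N : ℕ} (hn : n < 2 ^ N) (z : ℤ_[2]) (s : ℕ) :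
    digCount ((n : ℤ_[2]) + 2 ^ N * z) (N + s) = digCount (n : ℤ_[2]) N + digCount z s := by
  rw [digCount, Finset.sum_range_add, ← digCount, digCount_add_two_pow_mul_of_le _ _ le_rfl]
  exact congrArg _ (Finset.sum_congr rfl fun i _ ↦ dig_add_two_pow_mul_add hn z i)

end Digits

section BinaryDigitSum

theorem alphaNat_two_mul_add {r : ℕ} (hr : r < 2) (n : ℕ) :
    alphaNat (2 * n + r) = alphaNat n + r := by
  unfold alphaNat
  interval_cases r
  · rcases Nat.eq_zero_or_pos n with rfl | hn
    · simp
    · simp [Nat.bit0_bits n hn.ne']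
  · simp [Nat.bit1_bits]

theorem digCount_natCast {n N : ℕ} (hn : n < 2 ^ N) : digCount (n : ℤ_[2]) N = alphaNat n := by
  induction N generalizing n with
  | zero => simp_all [digCount, alphaNat]
  | succ N ih =>
    have hr : n % 2 < 2 ^ 1 := Nat.mod_lt n two_pos
    have hcast : (n : ℤ_[2]) = ((n % 2 : ℕ) : ℤ_[2]) + 2 ^ 1 * ((n / 2 : ℕ) : ℤ_[2]) := by
      exact_mod_cast (by omega : n = n % 2 + 2 ^ 1 * (n / 2))
    have hlow : digCount ((n % 2 : ℕ) : ℤ_[2]) 1 = n % 2 := by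
      rw [digCount, Finset.sum_range_one, dig_natCast, Nat.testBit_zero, Nat.mod_mod]
      rcases Nat.mod_two_eq_zero_or_one n with h | h <;> simp [h]
    rw [hcast, Nat.add_comm N, digCount_add_two_pow_mul_add hr, ih (by omega), hlow, add_comm,
      ← alphaNat_two_mul_add (Nat.mod_lt n two_pos), Nat.div_add_mod]

theorem alphaNat_add_two_pow_mul {a k : ℕ} (ha : a < 2 ^ k) (m : ℕ) :
    alphaNat (a + 2 ^ k * m) = alphaNat a + alphaNat m := by
  have hm : m < 2 ^ m := Nat.lt_two_pow_self
  rw [← digCount_natCast (Nat.add_two_pow_mul_lt ha hm), ← digCount_natCast ha,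
    ← digCount_natCast hm]
  push_cast
  exact digCount_add_two_pow_mul_add ha m m

end BinaryDigitSum

section ConjugacyMap

theorem summable_Phi_terms (x : ℤ_[2]) :
    Summable fun j ↦ (dig x j : ℤ_[2]) * 2 ^ j * inv3 ^ digCount x j := by
  refine .of_norm_bounded (g := fun j ↦ ‖(2 : ℤ_[2])‖ ^ j)
    (summable_geometric_of_lt_one (norm_nonneg _) (by rw [PadicInt.norm_two]; norm_num))
    fun j ↦ ?_
  rw [norm_mul, norm_mul, ← norm_pow]
  calc _ ≤ 1 * ‖(2 : ℤ_[2]) ^ j‖ * 1 := by gcongr <;> exact PadicInt.norm_le_one _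
    _ = _ := by ring

theorem Phi_zero : Phi 0 = 0 := by
  simp [Phi, dig_zero]

theorem neg_Phi_add_two_pow_mul {n N : ℕ} (hn : n < 2 ^ N) (z : ℤ_[2]) :
    -Phi ((n : ℤ_[2]) + 2 ^ N * z) =
      ∑ j ∈ Finset.range N,
          (dig (n : ℤ_[2]) j : ℤ_[2]) * 2 ^ j * inv3 ^ digCount (n : ℤ_[2]) j
        + 2 ^ N * inv3 ^ alphaNat n * -Phi z := by
  rw [Phi, Phi, neg_neg, neg_neg, ← (summable_Phi_terms _).sum_add_tsum_nat_add N,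
    ← (summable_Phi_terms z).tsum_mul_left]
  congr 1
  · refine Finset.sum_congr rfl fun j hj ↦ ?_
    rw [dig_add_two_pow_mul_of_lt _ _ (Finset.mem_range.mp hj),
      digCount_add_two_pow_mul_of_le _ _ (Finset.mem_range.mp hj).le]
  · refine tsum_congr fun i ↦ ?_
    rw [add_comm i N, dig_add_two_pow_mul_add hn, digCount_add_two_pow_mul_add hn,
      digCount_natCast hn, pow_add, pow_add]
    ring

theorem Phi_add_two_pow_mul {n N : ℕ} (hn : n < 2 ^ N) (z : ℤ_[2]) :
    Phi ((n : ℤ_[2]) + 2 ^ N * z) = Phi n + 2 ^ N * inv3 ^ alphaNat n * Phi z := by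
  have hz := neg_Phi_add_two_pow_mul hn z
  -- at `z = 0` the same expansion evaluates the finite head sum to `-Φ n`
  have h0 := neg_Phi_add_two_pow_mul hn 0
  rw [mul_zero, add_zero, Phi_zero] at h0
  linear_combination h0 - hz

end ConjugacyMap

section RepeatedBlocks

theorem bbarFin_succ (b v t : ℕ) : bbarFin b v (t + 1) = b + 2 ^ v * bbarFin b v t := by
  simp only [bbarFin, Finset.sum_range_succ', mul_add_one, pow_add]
  rw [← Finset.sum_mul]
  ring

theorem bbarFin_lt {b v : ℕ} (hb : b < 2 ^ v) (t : ℕ) : bbarFin b v t < 2 ^ (v * t) := by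
  induction t with
  | zero => simp [bbarFin]
  | succ t ih =>
    rw [bbarFin_succ, mul_add_one, Nat.add_comm (v * t)]
    exact Nat.add_two_pow_mul_lt hb ih

theorem alphaNat_bbarFin {b v : ℕ} (hb : b < 2 ^ v) (t : ℕ) :
    alphaNat (bbarFin b v t) = alphaNat b * t := by
  induction t with
  | zero => simp [bbarFin, alphaNat]
  | succ t ih => rw [bbarFin_succ, alphaNat_add_two_pow_mul hb, ih, mul_add_one, add_comm]

theorem bbar_eq_add (b : ℕ) {v : ℕ} (hv : 1 ≤ v) : bbar b v = b + 2 ^ v * bbar b v := by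
  have hgeom :
      ∑' i : ℕ, (2 : ℤ_[2]) ^ (v * i) = 1 + 2 ^ v * ∑' i, (2 : ℤ_[2]) ^ (v * i) := by
    conv_lhs => rw [(PadicInt.summable_two_pow_mul hv).tsum_eq_zero_add]
    simp only [mul_zero, pow_zero, mul_add_one, pow_add]
    rw [(PadicInt.summable_two_pow_mul hv).tsum_mul_right]
    ring
  rw [bbar]
  linear_combination (b : ℤ_[2]) * hgeom

theorem bbar_eq_bbarFin_add (b : ℕ) {v : ℕ} (hv : 1 ≤ v) (t : ℕ) :
    bbar b v = bbarFin b v t + 2 ^ (v * t) * bbar b v := by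
  induction t with
  | zero => simp [bbarFin]
  | succ t ih =>
    rw [bbarFin_succ]
    push_cast
    linear_combination bbar_eq_add b hv + 2 ^ v * ih

end RepeatedBlocks

theorem stmt10_general (a k b v : ℕ) (ha : a < 2 ^ k) (hb : b < 2 ^ v) (hv : 1 ≤ v)
    (q : ℤ_[2]) (hq : q = (a : ℤ_[2]) + 2 ^ k * bbar b v) (t : ℕ) :
    Phi ((a : ℤ_[2]) + 2 ^ k * (bbarFin b v t : ℤ_[2])) =
      Phi q - Phi (bbar b v) * inv3 ^ (alphaNat b * t + alphaNat a) * 2 ^ (k + t * v) := by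
  set n := a + 2 ^ k * bbarFin b v t
  have hn : n < 2 ^ (k + v * t) := Nat.add_two_pow_mul_lt ha (bbarFin_lt hb t)
  have hqn : q = n + 2 ^ (k + v * t) * bbar b v := by
    rw [hq]
    push_cast [n]
    linear_combination 2 ^ k * bbar_eq_bbarFin_add b hv t
  have hα : alphaNat n = alphaNat a + alphaNat b * t := by
    rw [alphaNat_add_two_pow_mul ha, alphaNat_bbarFin hb]
  rw [hqn, Phi_add_two_pow_mul hn, hα]
  push_cast [n]
  ring

/-- for `q = a + 2^k·b̄_{v,∞}` and `m = α(b)`,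
`Φ(a + 2^k·b̄_{v,t}) = Φ(q) − (Φ(b̄_{v,∞})/3^{mt+α(a)})·2^{k+tv}` for all `t ≥ 1`. -/
theorem stmt10 (a k b v : ℕ) (ha : a < 2 ^ k) (hb : b < 2 ^ v) (hv : 1 ≤ v)
    (q : ℤ_[2]) (hq : q = (a : ℤ_[2]) + 2 ^ k * bbar b v) (t : ℕ) (ht : 1 ≤ t) :
    Phi ((a : ℤ_[2]) + 2 ^ k * (bbarFin b v t : ℤ_[2])) =
      Phi q - Phi (bbar b v) * inv3 ^ (alphaNat b * t + alphaNat a) * 2 ^ (k + t * v) :=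
  stmt10_general a k b v ha hb hv q hq t
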